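/- Let T ≥ 2 be an integer and set j = r/√(ρ(A_T)·β·K̂). Every eigenvalue λ ∈ ℂ of the matrix T_{ρ(A_T)} can be written as λ = −K̄β + √(ρ(A_T)·β·K̂)·(z + 1/z) for some nonzero complex number z satisfying z^{2T+2} − j·z^{2T+1} + j·z − 1 = 0. -/

import Mathlib

noncomputable section

/-- The spectral radius of a real square matrix: the maximum modulus of its
complex eigenvalues. -/
def specRad {n : ℕ} (A : Matrix (Fin n) (Fin n) ℝ) : ℝ :=
  sSup {x : ℝ | ∃ μ : ℂ, μ ∈ spectrum ℂ (A.map Complex.ofReal) ∧ x = ‖μ‖}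

/-- `L̄ = L₁ / (1 - β K₁ / 2)`. -/
def Lbar (L1 K1 β : ℝ) : ℝ := L1 / (1 - β * K1 / 2)

/-- `K̄ = 3K₁/2 + K₁ L̄ / (2 ρ (1 - β))`. -/
def Kbar (L1 K1 rho β : ℝ) : ℝ := 3 * K1 / 2 + K1 * Lbar L1 K1 β / (2 * rho * (1 - β))

/-- `K̂ = K̄ + K₁ L̄ / ρ`. -/
def Khat (L1 K1 rho β : ℝ) : ℝ := Kbar L1 K1 rho β + K1 * Lbar L1 K1 β / rho

/-- `r = K̄ β + (K₁/ρ) L₁ β`. -/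
def rconst (L1 K1 rho β : ℝ) : ℝ := Kbar L1 K1 rho β * β + (K1 / rho) * L1 * β

/-- The `T × T` matrix `A_T` (1-based indices `1 ≤ i, j ≤ T` correspond to `0`-based
`Fin T` values `i-1, j-1`): entry `K̄ + L̄K₁/ρ` if `j = i - 1`, entry `(L̄K₁/ρ) β^(j-i+1)`
if `i - 1 < j ≤ T - 1`, entry `(L₁K₁/ρ) β^(T-i+1)` if `j = T`, and `0` if `j < i - 1`. -/
def AT (L1 K1 rho β : ℝ) (T : ℕ) : Matrix (Fin T) (Fin T) ℝ :=
  fun i j =>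
    if (j : ℕ) + 1 = T then (L1 * K1 / rho) * β ^ (T - (i : ℕ))
    else if (j : ℕ) + 1 = (i : ℕ) then Kbar L1 K1 rho β + Lbar L1 K1 β * K1 / rho
    else if (i : ℕ) ≤ (j : ℕ) then (Lbar L1 K1 β * K1 / rho) * β ^ ((j : ℕ) - (i : ℕ) + 1)
    else 0

end

noncomputable section

/-- The `T × T` tridiagonal matrix `T_λ`: every diagonal entry `-K̄β`, every subdiagonal
entry `K̂`, every superdiagonal entry `λβ`, except that the `(T,T)` entry is `-K̄β + r`. -/
def TT (L1 K1 rho β lam : ℝ) (T : ℕ) : Matrix (Fin T) (Fin T) ℝ :=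
  fun i j =>
    if (j : ℕ) = (i : ℕ) + 1 then lam * β
    else if (i : ℕ) = (j : ℕ) + 1 then Khat L1 K1 rho β
    else if (i : ℕ) = (j : ℕ) then
      (if (i : ℕ) + 1 = T then -(Kbar L1 K1 rho β * β) + rconst L1 K1 rho β
       else -(Kbar L1 K1 rho β * β))
    else 0

end

/-!
Write `λ - d = s (z + z⁻¹)` with `s² = a b`, where `a = ρ(A_T) β`, `b = K̂`, `d = -K̄β` are the
super-, sub- and diagonal entries of `T_{ρ(A_T)}`. Along an eigenvector `v`, the rescaled
entries `x_k = (a / s)^k v_{k-1}` (with `x_0 = 0`) satisfy the Chebyshev recurrence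
`x_{k+2} = (z + z⁻¹) x_{k+1} - x_k`, hence `x_k (z - z⁻¹) = x_1 (z^k - z^{-k})`. The last row,
perturbed by `r`, turns into `(z + z⁻¹ - j)(z^T - z^{-T}) = z^{T-1} - z^{1-T}`, which is the
claimed equation multiplied by `z^{-(T+1)}`. If `z² = 1` the equation holds for trivial reasons.
-/
open Matrix Finset

def tridiagCorner {R : Type*} [Zero R] [Add R] (a b d r : R) (n : ℕ) : Matrix (Fin n) (Fin n) R :=
  Matrix.of fun i j =>
    if (j : ℕ) = i + 1 then a
    else if (i : ℕ) = j + 1 then b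
    else if (i : ℕ) = j then (if (i : ℕ) + 1 = n then d + r else d)
    else 0

/-- The shift by one makes the missing sub-diagonal term of the first row read `b * 0`. -/
def shiftPad {R : Type*} [Zero R] {n : ℕ} (v : Fin n → R) : ℕ → R
  | 0 => 0
  | k + 1 => if h : k < n then v ⟨k, h⟩ else 0

section RowEquation
variable {R : Type*} [Semiring R] {n : ℕ}

@[simp] theorem shiftPad_zero (v : Fin n → R) : shiftPad v 0 = 0 := rfl

theorem shiftPad_succ_of_lt (v : Fin n → R) {k : ℕ} (hk : k < n) :
    shiftPad v (k + 1) = v ⟨k, hk⟩ := dif_pos hk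

theorem shiftPad_succ_self (v : Fin n → R) : shiftPad v (n + 1) = 0 := dif_neg (lt_irrefl n)

theorem tridiagCorner_mulVec_apply (a b d r : R) (v : Fin n → R) {k : ℕ} (hk : k < n) :
    (tridiagCorner a b d r n *ᵥ v) ⟨k, hk⟩ =
      b * shiftPad v k + d * shiftPad v (k + 1) + a * shiftPad v (k + 2)
        + if k + 1 = n then r * shiftPad v (k + 1) else 0 := by
  have hterm : ∀ j : Fin n, tridiagCorner a b d r n ⟨k, hk⟩ j * v j =
      (if k + 1 = j then a * shiftPad v (k + 2) else 0)
        + (if (j : ℕ) + 1 = k then b * shiftPad v k else 0)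
        + if k = j then (d + if k + 1 = n then r else 0) * shiftPad v (k + 1) else 0 := by
    rintro ⟨j, hj⟩
    rw [← shiftPad_succ_of_lt v hj]
    simp only [tridiagCorner, of_apply]
    split_ifs <;> subst_vars <;> first | omega | simp
  simp only [mulVec, dotProduct, hterm]
  rw [sum_add_distrib, sum_add_distrib,
    Fin.sum_univ_eq_sum_range (fun j => if k + 1 = j then _ else 0),
    Fin.sum_univ_eq_sum_range (fun j => if j + 1 = k then _ else 0),
    Fin.sum_univ_eq_sum_range (fun j => if k = j then _ else 0),
    sum_ite_eq, sum_ite_eq, if_pos (mem_range.2 hk)]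
  have hsup :
      (if k + 1 ∈ range n then a * shiftPad v (k + 2) else 0) = a * shiftPad v (k + 2) := by
    split_ifs with h
    · rfl
    · rw [show k + 2 = n + 1 by simp at h; omega, shiftPad_succ_self, mul_zero]
  have hsub :
      ∑ j ∈ range n, (if j + 1 = k then b * shiftPad v k else 0) = b * shiftPad v k := by
    rcases k with _ | k
    · simp
    · simp only [Nat.add_right_cancel_iff]
      rw [sum_ite_eq', if_pos (mem_range.2 (by omega))]
  rw [hsup, hsub]
  split_ifs <;> simp only [add_mul, add_zero] <;> abel

end RowEquation

theorem pow_sub_pow_of_recurrence {R : Type*} [CommRing R] {z w : R} (hzw : z * w = 1)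
    {x : ℕ → R} {N : ℕ} (h0 : x 0 = 0)
    (hrec : ∀ k, k + 2 ≤ N → x (k + 2) = (z + w) * x (k + 1) - x k) :
    ∀ k ≤ N, x k * (z - w) = x 1 * (z ^ k - w ^ k) := by
  intro k
  induction k using Nat.twoStepInduction with
  | zero => simp [h0]
  | one => simp
  | more k ih₀ ih₁ =>
    intro hk
    rw [hrec k hk]
    linear_combination (z + w) * ih₁ (by omega) - ih₀ (by omega)
      + x 1 * (z ^ k - w ^ k) * hzw

theorem Matrix.exists_mulVec_eq_smul_of_mem_spectrum {K ι : Type*} [Field K] [Fintype ι]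
    [DecidableEq ι] {A : Matrix ι ι K} {μ : K} (h : μ ∈ spectrum K A) :
    ∃ v ≠ 0, A *ᵥ v = μ • v := by
  rw [← Matrix.spectrum_toLin', ← Module.End.hasEigenvalue_iff_mem_spectrum] at h
  obtain ⟨v, hv⟩ := h.exists_hasEigenvector
  exact ⟨v, hv.2, by simpa using hv.apply_eq_smul⟩

theorem Complex.exists_add_inv_eq (μ : ℂ) : ∃ z : ℂ, z ≠ 0 ∧ z + z⁻¹ = μ := by
  obtain ⟨z, hz⟩ := exists_quadratic_eq_zero (a := (1 : ℂ)) (b := -μ) (c := 1) one_ne_zero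
    (IsAlgClosed.exists_eq_mul_self _)
  have hz0 : z ≠ 0 := by rintro rfl; simp at hz
  exact ⟨z, hz0, by field_simp; linear_combination hz⟩

theorem palindromic_eq_zero_of_sq_eq_one {R : Type*} [CommRing R] {z : R} (hz : z ^ 2 = 1)
    (j : R) (n : ℕ) : z ^ (2 * n + 2) - j * z ^ (2 * n + 1) + j * z - 1 = 0 := by
  have h₂ : z ^ (2 * n + 2) = 1 := by
    rw [show 2 * n + 2 = 2 * (n + 1) by ring, pow_mul, hz, one_pow]
  have h₁ : z ^ (2 * n + 1) = z := by rw [pow_succ, pow_mul, hz, one_pow, one_mul]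
  rw [h₂, h₁]
  ring

theorem palindromic_eq_zero_of_boundary {R : Type*} [CommRing R] {z w j : R} (hzw : z * w = 1)
    (m : ℕ) (h : (z + w - j) * (z ^ (m + 1) - w ^ (m + 1)) = z ^ m - w ^ m) :
    z ^ (2 * (m + 1) + 2) - j * z ^ (2 * (m + 1) + 1) + j * z - 1 = 0 := by
  have hk : ∀ k, z ^ k * w ^ k = 1 := fun k => by rw [← mul_pow, hzw, one_pow]
  linear_combination z ^ (m + 2) * h - z ^ (2 * m + 2) * hk 1 + (z ^ 2 - j * z) * hk (m + 1)
    - z ^ 2 * hk m + hk (m + 2)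

section Eigen
variable {K : Type*} [Field K] {a b d r s z w : K}

theorem tridiagCorner_boundary {m : ℕ} {v : Fin (m + 1) → K} (hv : v ≠ 0)
    (hMv : tridiagCorner a b d r (m + 1) *ᵥ v = (d + s * (z + w)) • v)
    (hs : s ^ 2 = a * b) (hs0 : s ≠ 0) (hzw : z * w = 1) (hzw' : z ≠ w) :
    (z + w - r / s) * (z ^ (m + 1) - w ^ (m + 1)) = z ^ m - w ^ m := by
  have hrow : ∀ k < m + 1, (d + s * (z + w)) * shiftPad v (k + 1) =
      b * shiftPad v k + d * shiftPad v (k + 1) + a * shiftPad v (k + 2)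
        + if k + 1 = m + 1 then r * shiftPad v (k + 1) else 0 := by
    intro k hk
    rw [← tridiagCorner_mulVec_apply _ _ _ _ _ hk, hMv, Pi.smul_apply, smul_eq_mul,
      shiftPad_succ_of_lt v hk]
  obtain ⟨q, hq⟩ : ∃ q, q * s = a := ⟨a / s, div_mul_cancel₀ a hs0⟩
  have hqb : q * b = s := by
    apply mul_right_cancel₀ hs0
    linear_combination b * hq - hs
  have hq0 : q ≠ 0 := left_ne_zero_of_mul (hqb ▸ hs0)
  -- the rescaling that puts the recurrence of the rows into Chebyshev form
  set x : ℕ → K := fun k => q ^ k * shiftPad v k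
  have hrec : ∀ k, k + 2 ≤ m + 1 → x (k + 2) = (z + w) * x (k + 1) - x k := by
    intro k hk
    have h := hrow k (by omega)
    rw [if_neg (by omega)] at h
    apply mul_right_cancel₀ hs0
    simp only [x]
    linear_combination -q ^ (k + 1) * h + q ^ (k + 1) * shiftPad v (k + 2) * hq
      - q ^ k * shiftPad v k * hqb
  have hbd : (z + w - r / s) * x (m + 1) = x m := by
    have h := hrow m (by omega)
    rw [if_pos rfl, shiftPad_succ_self] at h
    apply mul_right_cancel₀ hs0
    simp only [x]
    have hrs : r / s * s = r := div_mul_cancel₀ r hs0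
    linear_combination q ^ (m + 1) * h - q ^ (m + 1) * shiftPad v (m + 1) * hrs
      + q ^ m * shiftPad v m * hqb
  have hclosed := pow_sub_pow_of_recurrence hzw (by simp [x]) hrec
  have hx1 : x 1 ≠ 0 := by
    intro h
    apply hv
    ext ⟨k, hk⟩
    have := hclosed (k + 1) (by omega)
    rw [h, zero_mul] at this
    simpa [x, hq0, sub_eq_zero, hzw', shiftPad_succ_of_lt v hk] using this
  apply mul_left_cancel₀ hx1
  linear_combination -(z + w - r / s) * hclosed (m + 1) le_rfl + hclosed m (by omega)
    + (z - w) * hbd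

theorem tridiagCorner_eigenvalue {a b d r s μ : ℂ} {n : ℕ} (hs : s ^ 2 = a * b) (hs0 : s ≠ 0)
    (hμ : μ ∈ spectrum ℂ (tridiagCorner a b d r n)) :
    ∃ z : ℂ, z ≠ 0 ∧ z ^ (2 * n + 2) - r / s * z ^ (2 * n + 1) + r / s * z - 1 = 0 ∧
      μ = d + s * (z + 1 / z) := by
  obtain ⟨z, hz0, hz⟩ := Complex.exists_add_inv_eq ((μ - d) / s)
  have hμz : μ = d + s * (z + z⁻¹) := by rw [hz]; field_simp; ring
  refine ⟨z, hz0, ?_, by rwa [one_div]⟩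
  by_cases hz2 : z ^ 2 = 1
  · exact palindromic_eq_zero_of_sq_eq_one hz2 _ n
  have hzz : z ≠ z⁻¹ := fun h => hz2 (by rw [sq]; nth_rw 2 [h]; exact mul_inv_cancel₀ hz0)
  obtain ⟨v, hv, hMv⟩ := Matrix.exists_mulVec_eq_smul_of_mem_spectrum hμ
  obtain ⟨m, rfl⟩ : ∃ m, n = m + 1 :=
    Nat.exists_eq_succ_of_ne_zero (by rintro rfl; exact hv (Subsingleton.elim _ _))
  have hzw : z * z⁻¹ = 1 := mul_inv_cancel₀ hz0
  exact palindromic_eq_zero_of_boundary hzw m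
    (tridiagCorner_boundary hv (hμz ▸ hMv) hs hs0 hzw hzz)

end Eigen

section Parameters
variable {L1 K1 rho β : ℝ}

theorem Lbar_pos (hL1 : 0 < L1) (hβK : β * K1 < 2) : 0 < Lbar L1 K1 β :=
  div_pos hL1 (by linarith)

theorem Khat_pos (hL1 : 0 < L1) (hK1 : 0 < K1) (hrho : 0 < rho) (hβ1 : β < 1)
    (hβK : β * K1 < 2) : 0 < Khat L1 K1 rho β := by
  have hL := Lbar_pos hL1 hβK
  have hβ : 0 < 1 - β := by linarith
  unfold Khat Kbar
  positivity

end Parameters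

theorem TT_map_ofReal (L1 K1 rho β lam : ℝ) (T : ℕ) :
    (TT L1 K1 rho β lam T).map Complex.ofReal =
      tridiagCorner ((lam * β : ℝ) : ℂ) (Khat L1 K1 rho β)
        ((-(Kbar L1 K1 rho β * β) : ℝ) : ℂ) (rconst L1 K1 rho β) T := by
  ext i j
  simp only [TT, tridiagCorner, map_apply, of_apply]
  split_ifs <;> push_cast <;> rfl

theorem stmt7_general (L1 K1 rho β : ℝ)
    (hL1 : 0 < L1) (hK1 : 0 < K1) (hrho : 0 < rho)
    (hβ0 : 0 < β) (hβ1 : β < 1) (hβK : β * K1 < 2)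
    (T : ℕ)
    (hpos : 0 < specRad (AT L1 K1 rho β T))
    (lam : ℂ)
    (hlam : lam ∈ spectrum ℂ
      ((TT L1 K1 rho β (specRad (AT L1 K1 rho β T)) T).map Complex.ofReal)) :
    ∃ z : ℂ, z ≠ 0 ∧
      z ^ (2 * T + 2)
          - (rconst L1 K1 rho β
              / Real.sqrt (specRad (AT L1 K1 rho β T) * β * Khat L1 K1 rho β) : ℝ)
            * z ^ (2 * T + 1)
          + (rconst L1 K1 rho β
              / Real.sqrt (specRad (AT L1 K1 rho β T) * β * Khat L1 K1 rho β) : ℝ) * z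
          - 1 = 0 ∧
      lam = (-(Kbar L1 K1 rho β * β) : ℝ)
          + (Real.sqrt (specRad (AT L1 K1 rho β T) * β * Khat L1 K1 rho β) : ℝ)
            * (z + 1 / z) := by
  set ρ := specRad (AT L1 K1 rho β T)
  have hprod : 0 < ρ * β * Khat L1 K1 rho β :=
    mul_pos (mul_pos hpos hβ0) (Khat_pos hL1 hK1 hrho hβ1 hβK)
  have hs : ((√(ρ * β * Khat L1 K1 rho β) : ℝ) : ℂ) ^ 2 =
      ((ρ * β : ℝ) : ℂ) * (Khat L1 K1 rho β : ℂ) := by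
    rw [← Complex.ofReal_pow, Real.sq_sqrt hprod.le, Complex.ofReal_mul]
  have hs0 : ((√(ρ * β * Khat L1 K1 rho β) : ℝ) : ℂ) ≠ 0 :=
    Complex.ofReal_ne_zero.2 (Real.sqrt_pos.2 hprod).ne'
  rw [TT_map_ofReal] at hlam
  obtain ⟨z, hz0, hpoly, hlam⟩ := tridiagCorner_eigenvalue hs hs0 hlam
  exact ⟨z, hz0, by push_cast; exact hpoly, hlam⟩

/-- Every eigenvalue `λ ∈ ℂ` of `T_{ρ(A_T)}` has the form
`λ = -K̄β + √(ρ(A_T) β K̂) (z + 1/z)` for some nonzero root `z` of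
`z^{2T+2} - j z^{2T+1} + j z - 1`, where `j = r / √(ρ(A_T) β K̂)`. -/
theorem stmt7 (L1 K1 rho β : ℝ)
    (hL1 : 0 < L1) (hK1 : 0 < K1) (hrho : 0 < rho)
    (hβ0 : 0 < β) (hβ1 : β < 1) (hβK : β * K1 < 2)
    (T : ℕ) (hT : 2 ≤ T)
    (hpos : 0 < specRad (AT L1 K1 rho β T))
    (lam : ℂ)
    (hlam : lam ∈ spectrum ℂ
      ((TT L1 K1 rho β (specRad (AT L1 K1 rho β T)) T).map Complex.ofReal)) :
    ∃ z : ℂ, z ≠ 0 ∧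
      z ^ (2 * T + 2)
          - (rconst L1 K1 rho β
              / Real.sqrt (specRad (AT L1 K1 rho β T) * β * Khat L1 K1 rho β) : ℝ)
            * z ^ (2 * T + 1)
          + (rconst L1 K1 rho β
              / Real.sqrt (specRad (AT L1 K1 rho β T) * β * Khat L1 K1 rho β) : ℝ) * z
          - 1 = 0 ∧
      lam = (-(Kbar L1 K1 rho β * β) : ℝ)
          + (Real.sqrt (specRad (AT L1 K1 rho β T) * β * Khat L1 K1 rho β) : ℝ)
            * (z + 1 / z) :=
  stmt7_general L1 K1 rho β hL1 hK1 hrho hβ0 hβ1 hβK T hpos lam hlam
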